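/- arXiv:1411.1078 — 3 statements merged into one kernel-verified Lean document; each statement's English description precedes it below -/
import Mathlib

section
/- Let Ω be a measurable space with a finite nonatomic measure and V: Ω → ℝ measurable with esssup V − essinf V > β. Then sup { ∫ PV − (β/2) ∫ |P| : P ∈ L²(Ω), ∫ P = 0 } = +∞. -/
/-!
Pick levels `t < s` with `s - t > β` such that `{V > s}` and `{V < t}` both have positive measure,
and cut them down to sets `A`, `B` of positive measure on which `V` is bounded. The function
`P = μ(B) 𝟙_A - μ(A) 𝟙_B` has mean zero, `∫ |P| ≤ 2 μ(A) μ(B)` and `∫ P V ≥ μ(A) μ(B) (s - t)`, so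
`∫ P V - (β/2) ∫ |P| > 0`; this quantity is positively homogeneous in `P`, so scaling `P` makes
it arbitrarily large.
-/

open MeasureTheory Filter Set

namespace Filter

variable {ι : Type*} {l : Filter ι} [CountableInterFilter l] [l.NeBot]

theorem isCoboundedUnder_le_of_countableInterFilter (u : ι → ℝ) :
    l.IsCoboundedUnder (· ≤ ·) u := by
  suffices ∃ n : ℕ, ∃ᶠ x in l, -(n : ℝ) ≤ u x from
    let ⟨_, hn⟩ := this; .of_frequently_ge hn
  by_contra! h
  obtain ⟨x, hx⟩ := (eventually_countable_forall.mpr h).exists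
  obtain ⟨n, hn⟩ := exists_nat_gt (-u x)
  linarith [hx n]

theorem isCoboundedUnder_ge_of_countableInterFilter (u : ι → ℝ) :
    l.IsCoboundedUnder (· ≥ ·) u := by
  suffices ∃ n : ℕ, ∃ᶠ x in l, u x ≤ n from
    let ⟨_, hn⟩ := this; .of_frequently_le hn
  by_contra! h
  obtain ⟨x, hx⟩ := (eventually_countable_forall.mpr h).exists
  obtain ⟨n, hn⟩ := exists_nat_gt (u x)
  linarith [hx n]

end Filter

namespace MeasureTheory

variable {Ω : Type*} [MeasurableSpace Ω] {μ : Measure Ω} {A B : Set Ω}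

theorem measure_lt_ne_zero_of_lt_essSup (hμ : μ ≠ 0) {f : Ω → ℝ} {r : ℝ}
    (hr : r < essSup f μ) : μ {x | r < f x} ≠ 0 :=
  have := ae_neBot.mpr hμ
  frequently_ae_iff.mp <|
    frequently_lt_of_lt_limsup (isCoboundedUnder_le_of_countableInterFilter f) hr

theorem measure_gt_ne_zero_of_essInf_lt (hμ : μ ≠ 0) {f : Ω → ℝ} {r : ℝ}
    (hr : essInf f μ < r) : μ {x | f x < r} ≠ 0 :=
  have := ae_neBot.mpr hμ
  frequently_ae_iff.mp <|
    frequently_lt_of_liminf_lt (isCoboundedUnder_ge_of_countableInterFilter f) hr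

theorem exists_subset_measure_ne_zero_integrableOn [IsFiniteMeasure μ] {f : Ω → ℝ}
    (hf : Measurable f) {S : Set Ω} (hS : MeasurableSet S) (hμS : μ S ≠ 0) :
    ∃ A ⊆ S, MeasurableSet A ∧ μ A ≠ 0 ∧ IntegrableOn f A μ := by
  obtain ⟨n, hn⟩ : ∃ n : ℕ, μ (S ∩ {x | |f x| ≤ n}) ≠ 0 := by
    by_contra! h
    refine hμS (measure_mono_null (fun x hx => mem_iUnion.mpr ?_) (measure_iUnion_null h))
    exact (exists_nat_ge |f x|).imp fun n hn => ⟨hx, hn⟩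
  have hmeas : MeasurableSet (S ∩ {x | |f x| ≤ n}) :=
    hS.inter (measurableSet_le hf.abs measurable_const)
  refine ⟨_, inter_subset_left, hmeas, hn, ?_⟩
  exact Measure.integrableOn_of_bounded (measure_ne_top μ _) hf.aestronglyMeasurable
    (ae_restrict_of_forall_mem hmeas fun x hx => hx.2)

noncomputable def balancedDiff (μ : Measure Ω) (A B : Set Ω) : Ω → ℝ :=
  fun x => A.indicator (fun _ => μ.real B) x - B.indicator (fun _ => μ.real A) x

theorem memLp_balancedDiff [IsFiniteMeasure μ] (hA : MeasurableSet A) (hB : MeasurableSet B)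
    (p : ENNReal) : MemLp (balancedDiff μ A B) p μ :=
  (memLp_indicator_const p hA _ (.inr (measure_ne_top μ A))).sub
    (memLp_indicator_const p hB _ (.inr (measure_ne_top μ B)))

theorem integral_balancedDiff [IsFiniteMeasure μ] (hA : MeasurableSet A)
    (hB : MeasurableSet B) : ∫ x, balancedDiff μ A B x ∂μ = 0 := by
  unfold balancedDiff
  rw [integral_sub ((integrable_const _).indicator hA)
    ((integrable_const _).indicator hB), integral_indicator_const _ hA,
    integral_indicator_const _ hB, smul_eq_mul, smul_eq_mul, mul_comm, sub_self]

theorem integral_abs_balancedDiff_le [IsFiniteMeasure μ] (hA : MeasurableSet A)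
    (hB : MeasurableSet B) :
    ∫ x, |balancedDiff μ A B x| ∂μ ≤ 2 * μ.real A * μ.real B := by
  have hintA := (integrable_const (μ.real B)).indicator (μ := μ) hA
  have hintB := (integrable_const (μ.real A)).indicator (μ := μ) hB
  calc ∫ x, |balancedDiff μ A B x| ∂μ
      ≤ ∫ x, A.indicator (fun _ => μ.real B) x + B.indicator (fun _ => μ.real A) x ∂μ := by
        refine integral_mono ((memLp_balancedDiff hA hB 1).integrable le_rfl).abs
          (hintA.add hintB) fun x => (abs_sub _ _).trans_eq ?_
        rw [abs_of_nonneg (indicator_nonneg (fun _ _ => measureReal_nonneg) x),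
          abs_of_nonneg (indicator_nonneg (fun _ _ => measureReal_nonneg) x)]
    _ = 2 * μ.real A * μ.real B := by
        rw [integral_add hintA hintB, integral_indicator_const _ hA,
          integral_indicator_const _ hB, smul_eq_mul, smul_eq_mul]
        ring

theorem integral_balancedDiff_mul (hA : MeasurableSet A) (hB : MeasurableSet B) {V : Ω → ℝ}
    (hVA : IntegrableOn V A μ) (hVB : IntegrableOn V B μ) :
    ∫ x, balancedDiff μ A B x * V x ∂μ =
      μ.real B * ∫ x in A, V x ∂μ - μ.real A * ∫ x in B, V x ∂μ := by
  have hpt : ∀ x, balancedDiff μ A B x * V x =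
      A.indicator (fun x => μ.real B * V x) x - B.indicator (fun x => μ.real A * V x) x := by
    intro x
    simp only [balancedDiff, sub_mul, indicator_mul_left]
  simp_rw [hpt]
  rw [integral_sub (IntegrableOn.integrable_indicator (hVA.const_mul _) hA)
      (IntegrableOn.integrable_indicator (hVB.const_mul _) hB),
    integral_indicator hA, integral_indicator hB, integral_const_mul, integral_const_mul]

theorem pairing_balancedDiff_pos [IsFiniteMeasure μ] (hA : MeasurableSet A)
    (hB : MeasurableSet B) {V : Ω → ℝ} {β s t : ℝ} (hβ : 0 ≤ β) (hst : β < s - t)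
    (hμA : μ A ≠ 0) (hμB : μ B ≠ 0) (hVA : IntegrableOn V A μ) (hVB : IntegrableOn V B μ)
    (hsV : ∀ x ∈ A, s ≤ V x) (hVt : ∀ x ∈ B, V x ≤ t) :
    0 < (∫ x, balancedDiff μ A B x * V x ∂μ) - β / 2 * ∫ x, |balancedDiff μ A B x| ∂μ := by
  have ha : 0 < μ.real A := ENNReal.toReal_pos hμA (measure_ne_top μ A)
  have hb : 0 < μ.real B := ENNReal.toReal_pos hμB (measure_ne_top μ B)
  have hIA : s * μ.real A ≤ ∫ x in A, V x ∂μ :=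
    setIntegral_ge_of_const_le_real hA (measure_ne_top μ A) hsV hVA
  have hIB : ∫ x in B, V x ∂μ ≤ t * μ.real B := by
    simpa [mul_comm] using
      setIntegral_mono_on hVB (integrableOn_const (measure_ne_top μ B)) hB hVt
  have habs := mul_le_mul_of_nonneg_left (integral_abs_balancedDiff_le hA hB (μ := μ))
    (div_nonneg hβ zero_le_two)
  rw [integral_balancedDiff_mul hA hB hVA hVB]
  nlinarith [mul_le_mul_of_nonneg_left hIA hb.le, mul_le_mul_of_nonneg_left hIB ha.le,
    mul_pos ha hb]

theorem exists_pairing_gt_of_pos {P V : Ω → ℝ} {β : ℝ} (hP : MemLp P 2 μ)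
    (hP0 : ∫ x, P x ∂μ = 0) (hpos : 0 < (∫ x, P x * V x ∂μ) - β / 2 * ∫ x, |P x| ∂μ)
    (c : ℝ) :
    ∃ Q : Ω → ℝ, MemLp Q 2 μ ∧ (∫ x, Q x ∂μ = 0) ∧
      c < (∫ x, Q x * V x ∂μ) - β / 2 * ∫ x, |Q x| ∂μ := by
  set F := (∫ x, P x * V x ∂μ) - β / 2 * ∫ x, |P x| ∂μ
  set L := (|c| + 1) / F
  have hL : 0 < L := by positivity
  refine ⟨fun x => L * P x, hP.const_mul L, by rw [integral_const_mul, hP0, mul_zero], ?_⟩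
  have hscale : (∫ x, L * P x * V x ∂μ) - β / 2 * ∫ x, |L * P x| ∂μ = L * F := by
    simp only [mul_assoc, abs_mul, abs_of_pos hL, integral_const_mul]
    ring
  rw [hscale, div_mul_cancel₀ _ hpos.ne']
  linarith [le_abs_self c]

end MeasureTheory

open MeasureTheory

theorem sup_pairing_eq_top_of_large_oscillation_general
    {Ω : Type*} [MeasurableSpace Ω] (μ : Measure Ω) [IsFiniteMeasure μ]
    (β : ℝ) (hβ : 0 < β)
    (V : Ω → ℝ) (hV : AEMeasurable V μ)
    (hVosc : β < essSup V μ - essInf V μ) :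
    ∀ c : ℝ, ∃ P : Ω → ℝ, MemLp P 2 μ ∧ (∫ x, P x ∂μ = 0) ∧
      c < (∫ x, P x * V x ∂μ) - β / 2 * ∫ x, |P x| ∂μ := by
  have hμ : μ ≠ 0 := by
    -- for `μ = 0`, `essSup V μ` and `essInf V μ` are both the junk value `sInf ∅ = sSup ∅ = 0`
    rintro rfl
    exact hβ.not_gt (by simpa [essSup, essInf, limsup, liminf, limsSup, limsInf] using hVosc)
  have hW := hV.measurable_mk
  rw [essSup_congr_ae hV.ae_eq_mk, essInf_congr_ae hV.ae_eq_mk] at hVosc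
  obtain ⟨s, hs, hsW⟩ := exists_between (lt_sub_iff_add_lt.mp hVosc)
  obtain ⟨t, htW, hts⟩ := exists_between (lt_sub_iff_add_lt'.mpr hs)
  obtain ⟨A, hAs, hA, hμA, hWA⟩ := exists_subset_measure_ne_zero_integrableOn hW
    (measurableSet_lt measurable_const hW) (measure_lt_ne_zero_of_lt_essSup hμ hsW)
  obtain ⟨B, hBt, hB, hμB, hWB⟩ := exists_subset_measure_ne_zero_integrableOn hW
    (measurableSet_lt hW measurable_const) (measure_gt_ne_zero_of_essInf_lt hμ htW)
  have hpos := pairing_balancedDiff_pos hA hB hβ.le (lt_sub_comm.mp hts) hμA hμB hWA hWB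
    (fun x hx => (hAs hx).le) (fun x hx => (hBt hx).le)
  intro c
  obtain ⟨P, hP, hP0, hPc⟩ := exists_pairing_gt_of_pos (memLp_balancedDiff hA hB 2)
    (integral_balancedDiff hA hB) hpos c
  refine ⟨P, hP, hP0, ?_⟩
  rwa [integral_congr_ae (hV.ae_eq_mk.mono fun x hx => congrArg (P x * ·) hx)]

theorem sup_pairing_eq_top_of_large_oscillation
    {Ω : Type*} [MeasurableSpace Ω] (μ : Measure Ω) [IsFiniteMeasure μ]
    [NullSingletonClass μ]
    (β : ℝ) (hβ : 0 < β)
    (V : Ω → ℝ) (hV : AEMeasurable V μ)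
    (hVosc : β < essSup V μ - essInf V μ) :
    ∀ c : ℝ, ∃ P : Ω → ℝ, MemLp P 2 μ ∧ (∫ x, P x ∂μ = 0) ∧
      c < (∫ x, P x * V x ∂μ) - β / 2 * ∫ x, |P x| ∂μ :=
  sup_pairing_eq_top_of_large_oscillation_general μ β hβ V hV hVosc
end

section
/- Existence of the matched piecewise-cubic barrier profile: let 0 < c ≤ C. There exist unique α_± > 0 solving 4Cα_−² = c α_+² and (c/6)α_+³ + (2C/3)α_−³ = 1, such that for every β > 0, setting η_± = α_± β^{1/3}, A_− = C/3, A_+ = c/12, B_− = −2η_− A_−, B_+ = 2η_+ A_+, the function v(z) = (z+η_−)²(A_− z + B_−) + β/2 for −η_− ≤ z ≤ 0 and v(z) = (z−η_+)²(A_+ z + B_+) − β/2 for 0 ≤ z ≤ η_+ is C^{1,1} on [−η_−, η_+] (i.e. v, v' continuous and v'' bounded, with matching at 0 and at ±η_±), satisfies v(−η_−) = β/2, v(η_+) = −β/2, v'(−η_−) = v'(η_+) = 0, and v''(z) = 2Cz for z < 0, v''(z) = (c/2)z for z > 0. -/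
/-!
Positive solutions of `4Cα₋² = cα₊²` are exactly `α₊ = 2√(C/c) α₋`, which turns the second
equation into `D α₋³ = 1` for an explicit `D > 0`, with a unique positive root. Multiplying by
powers of `β^{1/3}` turns the two equations into the matching conditions at `z = 0` for `η_±`:
the cubic pieces then agree there in value and slope, and their second derivatives both vanish
at `0`, so the glued profile and its derivative are differentiable everywhere.
-/

open Set

theorem hasDerivAt_ite_le {F : Type*} [NormedAddCommGroup F] [NormedSpace ℝ F]
    {P Q P' Q' : ℝ → F} {a : ℝ}
    (hP : ∀ z ≤ a, HasDerivAt P (P' z) z) (hQ : ∀ z ≥ a, HasDerivAt Q (Q' z) z)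
    (hval : P a = Q a) (hder : P' a = Q' a) (z : ℝ) :
    HasDerivAt (fun x => if x ≤ a then P x else Q x) (if z ≤ a then P' z else Q' z) z := by
  rcases lt_trichotomy z a with hz | rfl | hz
  · rw [if_pos hz.le]
    refine (hP z hz.le).congr_of_eventuallyEq ?_
    filter_upwards [Iio_mem_nhds hz] with x hx using if_pos hx.le
  · have hleft : HasDerivWithinAt (fun x => if x ≤ z then P x else Q x) (P' z) (Iic z) z :=
      (hP z le_rfl).hasDerivWithinAt.congr_of_mem (fun x hx => if_pos hx) self_mem_Iic
    have hright : HasDerivWithinAt (fun x => if x ≤ z then P x else Q x) (P' z) (Ioi z) z := by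
      rw [hder]
      exact (hQ z le_rfl).hasDerivWithinAt.congr (fun x hx => if_neg (not_le.mpr hx))
        (by rw [if_pos le_rfl, hval])
    rw [if_pos le_rfl, ← hasDerivWithinAt_univ, ← Iic_union_Ioi]
    exact hleft.union hright
  · rw [if_neg (not_le.mpr hz)]
    refine (hQ z hz.le).congr_of_eventuallyEq ?_
    filter_upwards [Ioi_mem_nhds hz] with x hx using if_neg (not_le.mpr hx)

theorem HasDerivAt.sq_mul_affine {u : ℝ → ℝ} {z : ℝ} (hu : HasDerivAt u 1 z) (A B : ℝ) :
    HasDerivAt (fun x => u x ^ 2 * (A * x + B)) (2 * u z * (A * z + B) + u z ^ 2 * A) z := by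
  have hsq : HasDerivAt (fun x => u x ^ 2) (2 * u z) z := by simpa using hu.fun_pow 2
  have haff : HasDerivAt (fun x => A * x + B) A z := by
    simpa using ((hasDerivAt_id' z).const_mul A).add_const B
  exact hsq.mul haff

theorem HasDerivAt.two_mul_mul_affine_add_sq_mul {u : ℝ → ℝ} {z : ℝ} (hu : HasDerivAt u 1 z)
    (A B : ℝ) :
    HasDerivAt (fun x => 2 * u x * (A * x + B) + u x ^ 2 * A)
      (2 * (A * z + B) + 4 * u z * A) z := by
  have hlin : HasDerivAt (fun x => 2 * u x) 2 z := by simpa using hu.const_mul 2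
  have hsq : HasDerivAt (fun x => u x ^ 2) (2 * u z) z := by simpa using hu.fun_pow 2
  have haff : HasDerivAt (fun x => A * x + B) A z := by
    simpa using ((hasDerivAt_id' z).const_mul A).add_const B
  exact ((hlin.mul haff).add (hsq.mul_const A)).congr_deriv (by ring)

theorem rpow_one_div_three_pow_three {x : ℝ} (hx : 0 ≤ x) : (x ^ ((1 : ℝ) / 3)) ^ 3 = x := by
  simpa using Real.rpow_inv_natCast_pow hx (n := 3) (by norm_num)

theorem exists_unique_barrier_scales {c C : ℝ} (hc : 0 < c) (hC : 0 < C) :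
    ∃ αm αp : ℝ, 0 < αm ∧ 0 < αp ∧
      4 * C * αm ^ 2 = c * αp ^ 2 ∧
      c / 6 * αp ^ 3 + 2 * C / 3 * αm ^ 3 = 1 ∧
      (∀ αm' αp' : ℝ, 0 < αm' → 0 < αp' →
        4 * C * αm' ^ 2 = c * αp' ^ 2 →
        c / 6 * αp' ^ 3 + 2 * C / 3 * αm' ^ 3 = 1 → αm' = αm ∧ αp' = αp) := by
  set r := 2 * √(C / c)
  have hr2 : c * r ^ 2 = 4 * C := by
    rw [mul_pow, Real.sq_sqrt (by positivity)]
    field_simp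
    ring
  have hratio : ∀ x y, 0 < x → 0 < y → (4 * C * x ^ 2 = c * y ^ 2 ↔ y = r * x) := by
    intro x y hx hy
    rw [← pow_left_inj₀ hy.le (by positivity) two_ne_zero, mul_pow]
    constructor
    · intro h
      exact mul_left_cancel₀ hc.ne' (by linear_combination -h - x ^ 2 * hr2)
    · intro h
      linear_combination -c * h - x ^ 2 * hr2
  set D := c / 6 * r ^ 3 + 2 * C / 3
  have hD : 0 < D := by positivity
  have hcubic : ∀ x, c / 6 * (r * x) ^ 3 + 2 * C / 3 * x ^ 3 = D * x ^ 3 := fun x => by ring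
  set αm := D⁻¹ ^ ((1 : ℝ) / 3)
  have hαm : 0 < αm := by positivity
  have hαm3 : D * αm ^ 3 = 1 := by
    rw [rpow_one_div_three_pow_three (inv_nonneg.2 hD.le), mul_inv_cancel₀ hD.ne']
  refine ⟨αm, r * αm, hαm, by positivity, (hratio _ _ hαm (by positivity)).2 rfl,
    by rw [hcubic, hαm3], ?_⟩
  intro x y hx hy hsq hcube
  obtain rfl := (hratio x y hx hy).1 hsq
  have hx3 : x ^ 3 = αm ^ 3 := mul_left_cancel₀ hD.ne' (by rw [← hcubic, hcube, hαm3])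
  obtain rfl := (pow_left_inj₀ hx.le hαm.le three_ne_zero).1 hx3
  exact ⟨rfl, rfl⟩

theorem piecewise_cubic_barrier_of_matching {c C β ηm ηp : ℝ} (hηm : 0 ≤ ηm) (hηp : 0 < ηp)
    (hval : c / 6 * ηp ^ 3 + 2 * C / 3 * ηm ^ 3 = β) (hslope : 4 * C * ηm ^ 2 = c * ηp ^ 2) :
    let Am : ℝ := C / 3
    let Ap : ℝ := c / 12
    let Bm : ℝ := -(2 * ηm * Am)
    let Bp : ℝ := 2 * ηp * Ap
    let v : ℝ → ℝ := fun z =>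
      if z ≤ 0 then (z + ηm) ^ 2 * (Am * z + Bm) + β / 2
      else (z - ηp) ^ 2 * (Ap * z + Bp) - β / 2
    let v' : ℝ → ℝ := fun z =>
      if z ≤ 0 then 2 * (z + ηm) * (Am * z + Bm) + (z + ηm) ^ 2 * Am
      else 2 * (z - ηp) * (Ap * z + Bp) + (z - ηp) ^ 2 * Ap
    let v'' : ℝ → ℝ := fun z => if z < 0 then 2 * C * z else c / 2 * z
    (∀ z : ℝ, HasDerivAt v (v' z) z) ∧
    (∀ z : ℝ, HasDerivAt v' (v'' z) z) ∧
    v (-ηm) = β / 2 ∧ v ηp = -β / 2 ∧ v' (-ηm) = 0 ∧ v' ηp = 0 ∧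
    ContinuousOn v (Set.Icc (-ηm) ηp) ∧
    (∃ K : ℝ, ∀ z ∈ Set.Icc (-ηm) ηp, |v'' z| ≤ K) := by
  intro Am Ap Bm Bp v v' v''
  have hval0 : (0 + ηm) ^ 2 * (Am * 0 + Bm) + β / 2 = (0 - ηp) ^ 2 * (Ap * 0 + Bp) - β / 2 := by
    linear_combination -hval
  have hslope0 : 2 * (0 + ηm) * (Am * 0 + Bm) + (0 + ηm) ^ 2 * Am
      = 2 * (0 - ηp) * (Ap * 0 + Bp) + (0 - ηp) ^ 2 * Ap := by
    linear_combination -(1 / 4 : ℝ) * hslope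
  have hv : ∀ z, HasDerivAt v (v' z) z := hasDerivAt_ite_le
    (fun z _ => (((hasDerivAt_id' z).add_const ηm).sq_mul_affine Am Bm).add_const (β / 2))
    (fun z _ => (((hasDerivAt_id' z).sub_const ηp).sq_mul_affine Ap Bp).sub_const (β / 2))
    hval0 hslope0
  have hv' : ∀ z, HasDerivAt v' (v'' z) z := by
    intro z
    refine (hasDerivAt_ite_le
      (fun z _ => ((hasDerivAt_id' z).add_const ηm).two_mul_mul_affine_add_sq_mul Am Bm)
      (fun z _ => ((hasDerivAt_id' z).sub_const ηp).two_mul_mul_affine_add_sq_mul Ap Bp)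
      hslope0 (by ring) z).congr_deriv ?_
    simp only [v'']
    rcases lt_trichotomy z 0 with hz | rfl | hz
    · rw [if_pos hz.le, if_pos hz]
      ring
    · rw [if_pos le_rfl, if_neg (lt_irrefl 0)]
      ring
    · rw [if_neg (not_le.mpr hz), if_neg (not_lt.mpr hz.le)]
      ring
  refine ⟨hv, hv', ?_, ?_, ?_, ?_, fun z _ => (hv z).continuousAt.continuousWithinAt, ?_⟩
  · simp [v, hηm]
  · simp [v, not_le.mpr hηp, neg_div]
  · simp [v', hηm]
  · simp [v', not_le.mpr hηp]
  · refine ⟨(|2 * C| + |c / 2|) * (ηm + ηp), fun z hz => ?_⟩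
    have hz' : |z| ≤ ηm + ηp := abs_le.mpr ⟨by linarith [hz.1], by linarith [hz.2]⟩
    calc |v'' z| ≤ (|2 * C| + |c / 2|) * |z| := by
          simp only [v'']
          split_ifs <;> rw [abs_mul] <;>
            nlinarith [abs_nonneg (2 * C), abs_nonneg (c / 2), abs_nonneg z]
      _ ≤ _ := by gcongr

theorem matched_piecewise_cubic_barrier (c C : ℝ) (hc : 0 < c) (hcC : c ≤ C) :
    ∃ αm αp : ℝ, 0 < αm ∧ 0 < αp ∧
      4 * C * αm ^ 2 = c * αp ^ 2 ∧
      c / 6 * αp ^ 3 + 2 * C / 3 * αm ^ 3 = 1 ∧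
      (∀ αm' αp' : ℝ, 0 < αm' → 0 < αp' →
        4 * C * αm' ^ 2 = c * αp' ^ 2 →
        c / 6 * αp' ^ 3 + 2 * C / 3 * αm' ^ 3 = 1 → αm' = αm ∧ αp' = αp) ∧
      ∀ β : ℝ, 0 < β →
        let ηm : ℝ := αm * β ^ ((1 : ℝ) / 3)
        let ηp : ℝ := αp * β ^ ((1 : ℝ) / 3)
        let Am : ℝ := C / 3
        let Ap : ℝ := c / 12
        let Bm : ℝ := -(2 * ηm * Am)
        let Bp : ℝ := 2 * ηp * Ap
        let v : ℝ → ℝ := fun z =>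
          if z ≤ 0 then (z + ηm) ^ 2 * (Am * z + Bm) + β / 2
          else (z - ηp) ^ 2 * (Ap * z + Bp) - β / 2
        let v' : ℝ → ℝ := fun z =>
          if z ≤ 0 then 2 * (z + ηm) * (Am * z + Bm) + (z + ηm) ^ 2 * Am
          else 2 * (z - ηp) * (Ap * z + Bp) + (z - ηp) ^ 2 * Ap
        let v'' : ℝ → ℝ := fun z => if z < 0 then 2 * C * z else c / 2 * z
        (∀ z : ℝ, HasDerivAt v (v' z) z) ∧
        (∀ z : ℝ, HasDerivAt v' (v'' z) z) ∧
        v (-ηm) = β / 2 ∧ v ηp = -β / 2 ∧ v' (-ηm) = 0 ∧ v' ηp = 0 ∧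
        ContinuousOn v (Set.Icc (-ηm) ηp) ∧
        (∃ K : ℝ, ∀ z ∈ Set.Icc (-ηm) ηp, |v'' z| ≤ K) := by
  obtain ⟨αm, αp, hαm, hαp, hslope, hval, huniq⟩ :=
    exists_unique_barrier_scales hc (hc.trans_le hcC)
  refine ⟨αm, αp, hαm, hαp, hslope, hval, huniq, fun β hβ => ?_⟩
  have ht : 0 < β ^ ((1 : ℝ) / 3) := by positivity
  have ht3 := rpow_one_div_three_pow_three hβ.le
  exact piecewise_cubic_barrier_of_matching (mul_pos hαm ht).le (mul_pos hαp ht)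
    (by linear_combination β * hval + (c / 6 * αp ^ 3 + 2 * C / 3 * αm ^ 3) * ht3)
    (by linear_combination (β ^ ((1 : ℝ) / 3)) ^ 2 * hslope)
end

section
/- Construction of the one-interval solution in the symmetric case: let a ∈ C¹([0,π]) satisfy a(0) = a(π) = 0, a > 0 on (0,π), and let ρ, γ be smooth positive weight functions on (0,π). Let α ∈ (0, max a) with {a = α} = {φ₋ < φ₊} and a' ≥ 0 on (0,φ₋), a' ≤ 0 on (φ₊,π), and suppose I(α) := ∫_{φ₋}^{φ₊}(a − α)(γ/ρ) dφ = β and the running integral v(φ) = −β/2 + ∫_{φ₋}^{φ}(a−α)(γ/ρ) satisfies |v| < β/2 on (φ₋,φ₊). Then the function V equal to −β/2 on (0,φ₋), to v on (φ₋,φ₊), and to β/2 on (φ₊,π) is C¹ on [0,π] with V'(φ₋) = V'(φ₊) = 0 and solves the 1-D free boundary system: |V| ≤ β/2; (ργ⁻¹V' − a)' = 0 on {|V| < β/2}; a' ≥ 0 on {V = −β/2}; a' ≤ 0 on {V = β/2}. -/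
open Set intervalIntegral

/- STATEMENT 19: construction of the one-interval solution of the 1-D free
boundary problem in the symmetric (surface of revolution) case.  With
`a ∈ C¹([0,π])`, `a(0) = a(π) = 0`, `a > 0` on `(0,π)`, weights `ρ, γ`
continuous and positive on `(0,π)`, a level `α ∈ (0, max a)` with
`{a = α} ∩ (0,π) = {φ₋, φ₊}`, sign conditions `a' ≥ 0` on `(0,φ₋)` and
`a' ≤ 0` on `(φ₊,π)`, total weight `I(α) = ∫_{φ₋}^{φ₊}(a−α)(γ/ρ) = β`, and
the running integral `v` strictly between the obstacles on `(φ₋,φ₊)`, the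
glued function `V` (equal to `−β/2`, `v`, `β/2` on the three pieces) is `C¹`
on `[0,π]` with vanishing derivative at `φ_±` and solves the 1-D free
boundary system: `|V| ≤ β/2`; `(ργ⁻¹V′ − a)′ = 0` on `{|V| < β/2}`;
`a' ≥ 0` on `{V = −β/2}`; `a' ≤ 0` on `{V = β/2}`. -/
theorem one_interval_solution_symmetric_case
    (a a' ρ γ : ℝ → ℝ) (α β φm φp : ℝ)
    (hβ : 0 < β)
    (ha0 : a 0 = 0) (haπ : a Real.pi = 0)
    (hapos : ∀ φ ∈ Ioo 0 Real.pi, 0 < a φ)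
    (hderiv : ∀ φ ∈ Icc 0 Real.pi, HasDerivAt a (a' φ) φ)
    (ha'cont : ContinuousOn a' (Icc 0 Real.pi))
    (hρc : ContinuousOn ρ (Ioo 0 Real.pi)) (hγc : ContinuousOn γ (Ioo 0 Real.pi))
    (hρpos : ∀ φ ∈ Ioo 0 Real.pi, 0 < ρ φ) (hγpos : ∀ φ ∈ Ioo 0 Real.pi, 0 < γ φ)
    (hφm : φm ∈ Ioo 0 Real.pi) (hφp : φp ∈ Ioo 0 Real.pi) (hmp : φm < φp)
    (hαpos : 0 < α) (hαmax : α < sSup (a '' Icc 0 Real.pi))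
    (hlevel : {φ ∈ Ioo 0 Real.pi | a φ = α} = {φm, φp})
    (ha'left : ∀ φ ∈ Ioo 0 φm, 0 ≤ a' φ)
    (ha'right : ∀ φ ∈ Ioo φp Real.pi, a' φ ≤ 0)
    (hI : (∫ φ in φm..φp, (a φ - α) * (γ φ / ρ φ)) = β)
    (v : ℝ → ℝ)
    (hv : v = fun φ => -β / 2 + ∫ t in φm..φ, (a t - α) * (γ t / ρ t))
    (hvin : ∀ φ ∈ Ioo φm φp, |v φ| < β / 2)
    (V : ℝ → ℝ)
    (hV : V = fun φ => if φ < φm then -β / 2 else if φ ≤ φp then v φ else β / 2)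
    (Vd : ℝ → ℝ)
    (hVd : Vd = fun φ => if φ ∈ Icc φm φp then (a φ - α) * (γ φ / ρ φ) else 0) :
    (∀ φ ∈ Icc 0 Real.pi, |V φ| ≤ β / 2) ∧
    (∀ φ ∈ Icc 0 Real.pi, HasDerivWithinAt V (Vd φ) (Icc 0 Real.pi) φ) ∧
    ContinuousOn Vd (Icc 0 Real.pi) ∧
    Vd φm = 0 ∧ Vd φp = 0 ∧
    (∀ φ ∈ Icc 0 Real.pi, |V φ| < β / 2 →
      HasDerivAt (fun t => ρ t / γ t * Vd t - a t) 0 φ) ∧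
    (∀ φ ∈ Icc 0 Real.pi, V φ = -β / 2 → 0 ≤ a' φ) ∧
    (∀ φ ∈ Icc 0 Real.pi, V φ = β / 2 → a' φ ≤ 0) := by
  have hsub : Icc φm φp ⊆ Ioo 0 Real.pi := fun t ht =>
    ⟨lt_of_lt_of_le hφm.1 ht.1, lt_of_le_of_lt ht.2 hφp.2⟩
  have haφm : a φm = α := by
    have h : φm ∈ {φ ∈ Ioo 0 Real.pi | a φ = α} := by rw [hlevel]; exact Or.inl rfl
    exact h.2
  have haφp : a φp = α := by
    have h : φp ∈ {φ ∈ Ioo 0 Real.pi | a φ = α} := by rw [hlevel]; exact Or.inr rfl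
    exact h.2
  set g : ℝ → ℝ := fun t => (a t - α) * (γ t / ρ t) with hgdef
  have hgφm : g φm = 0 := by simp [hgdef, haφm]
  have hgφp : g φp = 0 := by simp [hgdef, haφp]
  have hVdg : ∀ t ∈ Icc φm φp, Vd t = g t := by
    intro t ht; rw [hVd]; exact if_pos ht
  have hVd0 : ∀ t, t ∉ Icc φm φp → Vd t = 0 := by
    intro t ht; rw [hVd]; exact if_neg ht
  have hVdm : Vd φm = 0 := by rw [hVdg φm ⟨le_rfl, hmp.le⟩, hgφm]
  have hVdp : Vd φp = 0 := by rw [hVdg φp ⟨hmp.le, le_rfl⟩, hgφp]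
  have hacont : ContinuousOn a (Ioo 0 Real.pi) := fun t ht =>
    ((hderiv t (Ioo_subset_Icc_self ht)).continuousAt).continuousWithinAt
  have hρne : ∀ t ∈ Ioo 0 Real.pi, ρ t ≠ 0 := fun t ht => (hρpos t ht).ne'
  have hgc : ContinuousOn g (Ioo 0 Real.pi) :=
    (hacont.sub continuousOn_const).mul (hγc.div hρc hρne)
  have hgca : ∀ t ∈ Ioo 0 Real.pi, ContinuousAt g t := fun t ht =>
    hgc.continuousAt (isOpen_Ioo.mem_nhds ht)
  have hvm : v φm = -β / 2 := by simp [hv]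
  have hvp : v φp = β / 2 := by rw [hv]; show -β / 2 + _ = β / 2; rw [hI]; ring
  have hVeq : ∀ t ∈ Icc φm φp, V t = v t := by
    intro t ht; rw [hV]; simp [not_lt.2 ht.1, ht.2]
  have hVlow : ∀ t, t ≤ φm → V t = -β / 2 := by
    intro t ht
    rcases lt_or_eq_of_le ht with h | h
    · rw [hV]; simp [h]
    · rw [h, hVeq φm ⟨le_rfl, hmp.le⟩, hvm]
  have hVhigh : ∀ t, φp ≤ t → V t = β / 2 := by
    intro t ht
    rcases eq_or_lt_of_le ht with h | h
    · rw [← h, hVeq φp ⟨hmp.le, le_rfl⟩, hvp]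
    · rw [hV]; simp [not_lt.2 (le_of_lt (hmp.trans h)), not_le.2 h]
  have habs2 : |(-β / 2 : ℝ)| = β / 2 := by rw [abs_of_nonpos (by linarith)]; ring
  have habs3 : |(β / 2 : ℝ)| = β / 2 := abs_of_pos (by linarith)
  have hvderiv : ∀ t ∈ Icc φm φp, HasDerivAt v (g t) t := by
    intro t ht
    rw [hv]
    have hint : IntervalIntegrable g MeasureTheory.volume φm t := by
      apply ContinuousOn.intervalIntegrable
      apply hgc.mono
      rw [uIcc_of_le ht.1]
      exact (Icc_subset_Icc le_rfl ht.2).trans hsub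
    have hmeas : StronglyMeasurableAtFilter g (nhds t) MeasureTheory.volume :=
      ContinuousOn.stronglyMeasurableAtFilter isOpen_Ioo hgc t (hsub ht)
    exact HasDerivAt.const_add _
      (intervalIntegral.integral_hasDerivAt_right hint hmeas (hgca t (hsub ht)))
  have hmemm : Icc φm φp ∈ nhdsWithin φm (Ici φm) := by
    rw [← Ici_inter_Iic]
    exact Filter.inter_mem self_mem_nhdsWithin
      (mem_nhdsWithin_of_mem_nhds (Iic_mem_nhds hmp))
  have hmemp : Icc φm φp ∈ nhdsWithin φp (Iic φp) := by
    rw [← Ici_inter_Iic]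
    exact Filter.inter_mem
      (mem_nhdsWithin_of_mem_nhds (Ici_mem_nhds hmp)) self_mem_nhdsWithin
  have hVderiv : ∀ φ ∈ Icc 0 Real.pi, HasDerivAt V (Vd φ) φ := by
    intro φ _
    rcases lt_trichotomy φ φm with h1 | h1 | h1
    · rw [hVd0 φ (fun hc => absurd hc.1 (not_le.2 h1))]
      apply (hasDerivAt_const φ (-β / 2)).congr_of_eventuallyEq
      filter_upwards [Iio_mem_nhds h1] with t ht
      exact hVlow t ht.le
    · subst h1
      rw [hVdm]
      have hleft : HasDerivWithinAt V 0 (Iic φ) φ :=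
        (hasDerivWithinAt_const φ (Iic φ) (-β / 2)).congr (fun t ht => hVlow t (mem_Iic.1 ht)) (hVlow φ le_rfl)
      have hvd : HasDerivAt v 0 φ := hgφm ▸ hvderiv φ ⟨le_rfl, hmp.le⟩
      have hright : HasDerivWithinAt V 0 (Ici φ) φ :=
        ((hvd.hasDerivWithinAt (s := Icc φ φp)).congr hVeq
          (hVeq φ ⟨le_rfl, hmp.le⟩)).mono_of_mem_nhdsWithin hmemm
      have h := hleft.union hright
      rw [Iic_union_Ici] at h
      exact hasDerivWithinAt_univ.1 h
    · rcases lt_trichotomy φ φp with h2 | h2 | h2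
      · rw [hVdg φ ⟨h1.le, h2.le⟩]
        apply (hvderiv φ ⟨h1.le, h2.le⟩).congr_of_eventuallyEq
        filter_upwards [Ioo_mem_nhds h1 h2] with t ht
        exact hVeq t (Ioo_subset_Icc_self ht)
      · subst h2
        rw [hVdp]
        have hvd : HasDerivAt v 0 φ := hgφp ▸ hvderiv φ ⟨hmp.le, le_rfl⟩
        have hleft : HasDerivWithinAt V 0 (Iic φ) φ :=
          ((hvd.hasDerivWithinAt (s := Icc φm φ)).congr hVeq
            (hVeq φ ⟨hmp.le, le_rfl⟩)).mono_of_mem_nhdsWithin hmemp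
        have hright : HasDerivWithinAt V 0 (Ici φ) φ :=
          (hasDerivWithinAt_const φ (Ici φ) (β / 2)).congr (fun t ht => hVhigh t (mem_Ici.1 ht)) (hVhigh φ le_rfl)
        have h := hleft.union hright
        rw [Iic_union_Ici] at h
        exact hasDerivWithinAt_univ.1 h
      · rw [hVd0 φ (fun hc => absurd hc.2 (not_le.2 h2))]
        apply (hasDerivAt_const φ (β / 2)).congr_of_eventuallyEq
        filter_upwards [Ioi_mem_nhds h2] with t ht
        exact hVhigh t ht.le
  have hVdcont : ContinuousOn Vd (Icc 0 Real.pi) := by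
    intro φ _
    apply ContinuousAt.continuousWithinAt
    rcases lt_trichotomy φ φm with h1 | h1 | h1
    · apply Filter.EventuallyEq.continuousAt (y := 0)
      filter_upwards [Iio_mem_nhds h1] with t ht
      exact hVd0 t (fun hc => absurd hc.1 (not_le.2 ht))
    · subst h1
      have hl : ContinuousWithinAt Vd (Iio φ) φ :=
        continuousWithinAt_const.congr
          (fun t ht => hVd0 t (fun hc => absurd hc.1 (not_le.2 ht))) hVdm
      have hr : ContinuousWithinAt Vd (Ici φ) φ := by
        apply ((hgca φ (hsub ⟨le_rfl, hmp.le⟩)).continuousWithinAt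
          (s := Ici φ)).congr_of_eventuallyEq ?_ (hVdg φ ⟨le_rfl, hmp.le⟩)
        filter_upwards [hmemm] with t ht
        exact hVdg t ht
      have h := hl.union hr
      rw [Iio_union_Ici] at h
      exact (continuousWithinAt_univ Vd _).1 h
    · rcases lt_trichotomy φ φp with h2 | h2 | h2
      · apply ContinuousAt.congr (hgca φ (hsub ⟨h1.le, h2.le⟩))
        filter_upwards [Ioo_mem_nhds h1 h2] with t ht
        exact (hVdg t (Ioo_subset_Icc_self ht)).symm
      · subst h2
        have hl : ContinuousWithinAt Vd (Iic φ) φ := by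
          apply ((hgca φ (hsub ⟨hmp.le, le_rfl⟩)).continuousWithinAt
            (s := Iic φ)).congr_of_eventuallyEq ?_ (hVdg φ ⟨hmp.le, le_rfl⟩)
          filter_upwards [hmemp] with t ht
          exact hVdg t ht
        have hr : ContinuousWithinAt Vd (Ioi φ) φ :=
          continuousWithinAt_const.congr
            (fun t ht => hVd0 t (fun hc => absurd hc.2 (not_le.2 ht))) hVdp
        have h := hl.union hr
        rw [Iic_union_Ioi] at h
        exact (continuousWithinAt_univ Vd _).1 h
      · apply Filter.EventuallyEq.continuousAt (y := 0)
        filter_upwards [Ioi_mem_nhds h2] with t ht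
        exact hVd0 t (fun hc => absurd hc.2 (not_le.2 ht))
  have habs : ∀ φ ∈ Icc 0 Real.pi, |V φ| ≤ β / 2 := by
    intro φ _
    rcases lt_or_ge φ φm with h1 | h1
    · rw [hVlow φ h1.le, habs2]
    · rcases le_or_gt φ φp with h2 | h2
      · rcases eq_or_lt_of_le h1 with he | h1'
        · rw [← he, hVlow φm le_rfl, habs2]
        · rcases eq_or_lt_of_le h2 with he | h2'
          · rw [he, hVhigh φp le_rfl, habs3]
          · rw [hVeq φ ⟨h1, h2⟩]; exact (hvin φ ⟨h1', h2'⟩).le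
      · rw [hVhigh φ h2.le, habs3]
  have hflat : ∀ φ ∈ Icc 0 Real.pi, |V φ| < β / 2 →
      HasDerivAt (fun t => ρ t / γ t * Vd t - a t) 0 φ := by
    intro φ _ hlt
    have hφin : φ ∈ Ioo φm φp := by
      constructor
      · rcases lt_or_ge φm φ with h | h
        · exact h
        · rw [hVlow φ h, habs2] at hlt; exact absurd hlt (lt_irrefl _)
      · rcases lt_or_ge φ φp with h | h
        · exact h
        · rw [hVhigh φ h, habs3] at hlt; exact absurd hlt (lt_irrefl _)
    apply (hasDerivAt_const φ (-α)).congr_of_eventuallyEq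
    filter_upwards [Ioo_mem_nhds hφin.1 hφin.2] with t ht
    have htin : t ∈ Ioo 0 Real.pi := hsub (Ioo_subset_Icc_self ht)
    rw [hVdg t (Ioo_subset_Icc_self ht), hgdef]
    have h1 : ρ t ≠ 0 := (hρpos t htin).ne'
    have h2 : γ t ≠ 0 := (hγpos t htin).ne'
    field_simp
    ring
  have hclosL : ∀ φ ∈ Icc 0 φm, 0 ≤ a' φ := by
    intro φ hφ
    have hIcc : Icc 0 φm ⊆ Icc 0 Real.pi := Icc_subset_Icc le_rfl hφm.2.le
    have hne : (nhdsWithin φ (Ioo 0 φm)).NeBot := by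
      apply mem_closure_iff_nhdsWithin_neBot.1
      rw [closure_Ioo hφm.1.ne]
      exact hφ
    have ht : Filter.Tendsto a' (nhdsWithin φ (Ioo 0 φm)) (nhds (a' φ)) :=
      (ha'cont φ (hIcc hφ)).mono
        (fun t ht => ⟨ht.1.le, (ht.2.trans hφm.2).le⟩)
    exact ge_of_tendsto ht
      (Filter.eventually_of_mem self_mem_nhdsWithin (fun t ht' => ha'left t ht'))
  have hclosR : ∀ φ ∈ Icc φp Real.pi, a' φ ≤ 0 := by
    intro φ hφ
    have hIcc : Icc φp Real.pi ⊆ Icc 0 Real.pi := Icc_subset_Icc hφp.1.le le_rfl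
    have hne : (nhdsWithin φ (Ioo φp Real.pi)).NeBot := by
      apply mem_closure_iff_nhdsWithin_neBot.1
      rw [closure_Ioo hφp.2.ne]
      exact hφ
    have ht : Filter.Tendsto a' (nhdsWithin φ (Ioo φp Real.pi)) (nhds (a' φ)) :=
      (ha'cont φ (hIcc hφ)).mono
        (fun t ht => ⟨(hφp.1.trans ht.1).le, ht.2.le⟩)
    exact le_of_tendsto ht
      (Filter.eventually_of_mem self_mem_nhdsWithin (fun t ht' => ha'right t ht'))
  have hVmimp : ∀ φ ∈ Icc 0 Real.pi, V φ = -β / 2 → 0 ≤ a' φ := by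
    intro φ hφ hVφ
    rcases le_or_gt φ φm with h1 | h1
    · exact hclosL φ ⟨hφ.1, h1⟩
    · exfalso
      rcases lt_or_ge φ φp with h2 | h2
      · have h := hvin φ ⟨h1, h2⟩
        rw [← hVeq φ ⟨h1.le, h2.le⟩, hVφ, habs2] at h
        exact absurd h (lt_irrefl _)
      · rw [hVhigh φ h2] at hVφ; linarith
  have hVpimp : ∀ φ ∈ Icc 0 Real.pi, V φ = β / 2 → a' φ ≤ 0 := by
    intro φ hφ hVφ
    rcases le_or_gt φp φ with h1 | h1
    · exact hclosR φ ⟨h1, hφ.2⟩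
    · exfalso
      rcases lt_or_ge φm φ with h2 | h2
      · have h := hvin φ ⟨h2, h1⟩
        rw [← hVeq φ ⟨h2.le, h1.le⟩, hVφ, habs3] at h
        exact absurd h (lt_irrefl _)
      · rw [hVlow φ h2] at hVφ; linarith
  exact ⟨habs, fun φ hφ => (hVderiv φ hφ).hasDerivWithinAt, hVdcont, hVdm, hVdp,
    hflat, hVmimp, hVpimp⟩
end
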